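/- For a nonzero f ∈ S_d with leading monomial m_α with respect to <_γ, the leading (maximal weight with respect to γ) basis wedge appearing in the Plücker coordinates of the subspace span{m·f : m ∈ M_D} ⊂ S_{d+D} is ⋀_{i=1}^{|M_D|} (m_{i,D}·m_α), and its total weight equals |M_D|·⟨γ, exp(m_α)⟩ + ⟨γ, Σ_i exp(m_{i,D})⟩. -/

import Mathlib

/-!
Realise `<_γ` as the pullback of the lexicographic order on `ℝ ×ₗ Lex (Fin (r + 1) →₀ ℕ)` along
the additive map `s ↦ (⟨γ, s⟩, s)`; this makes it a translation-invariant linear order. An entry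
`coeff (m_j * m_α) (m_i * f)` can only be nonzero if `m_j * m_α = m_i * s` with `s ≤_γ m_α`, which
forces `m_j ≤_γ m_i`. So the minor at the wedge `⋀ m_i * m_α` is triangular with diagonal entries
`coeff m_α f`. A nonzero minor at any other wedge `⋀ a_j` has a nonvanishing term in its
Leibniz expansion, so `a_j = m_{σ j} * s_j` with `s_j ∈ supp f`, and `⟨γ, s_j⟩ ≤ ⟨γ, m_α⟩`
bounds its weight.
-/

open MvPolynomial

noncomputable def wt (r : ℕ) (γ : Fin (r + 1) → ℝ) (s : Fin (r + 1) →₀ ℕ) : ℝ :=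
  ∑ i, γ i * s i

def ltGamma (r : ℕ) (γ : Fin (r + 1) → ℝ) (s t : Fin (r + 1) →₀ ℕ) : Prop :=
  wt r γ s < wt r γ t ∨
    (wt r γ s = wt r γ t ∧ ∃ i, (∀ j, j < i → s j = t j) ∧ s i < t i)

theorem Matrix.det_eq_prod_diag_of_lt_imp_eq_zero {ι R α : Type*} [Fintype ι] [DecidableEq ι]
    [CommRing R] [LinearOrder α] (M : Matrix ι ι R) {g : ι → α} (hg : Function.Injective g)
    (hM : ∀ i j, g i < g j → M i j = 0) : M.det = ∏ i, M i i := by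
  let := LinearOrder.lift' g hg
  convert Matrix.det_of_isLowerTriangular M fun i j h => hM i j h

theorem Matrix.exists_perm_forall_ne_zero_of_det_ne_zero {ι R : Type*} [Fintype ι]
    [DecidableEq ι] [CommRing R] {M : Matrix ι ι R} (h : M.det ≠ 0) :
    ∃ σ : Equiv.Perm ι, ∀ i, M (σ i) i ≠ 0 := by
  rw [Matrix.det_apply] at h
  obtain ⟨σ, -, hσ⟩ := Finset.exists_ne_zero_of_sum_ne_zero h
  exact ⟨σ, fun i hi => right_ne_zero_of_smul hσ (Finset.prod_eq_zero (Finset.mem_univ i) hi)⟩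

theorem MvPolynomial.exists_mem_support_add_eq_of_coeff_monomial_mul_ne_zero {σ R : Type*}
    [CommSemiring R] {p : MvPolynomial σ R} {t n : σ →₀ ℕ} {c : R}
    (h : coeff n (monomial t c * p) ≠ 0) : ∃ s ∈ p.support, t + s = n := by
  rw [coeff_monomial_mul'] at h
  split_ifs at h with htn
  · exact ⟨n - t, mem_support_iff.mpr (right_ne_zero_of_mul h), add_tsub_cancel_of_le htn⟩
  · exact absurd rfl h

section weight

variable {r : ℕ} {γ : Fin (r + 1) → ℝ}

variable (r γ) in
noncomputable def wtHom : (Fin (r + 1) →₀ ℕ) →+ ℝ where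
  toFun := wt r γ
  map_zero' := by simp [wt]
  map_add' s t := by simp [wt, mul_add, Finset.sum_add_distrib]

theorem wt_add (s t : Fin (r + 1) →₀ ℕ) : wt r γ (s + t) = wt r γ s + wt r γ t :=
  map_add (wtHom r γ) s t

theorem wt_sum {ι : Type*} (s : Finset ι) (g : ι → (Fin (r + 1) →₀ ℕ)) :
    wt r γ (∑ i ∈ s, g i) = ∑ i ∈ s, wt r γ (g i) :=
  map_sum (wtHom r γ) g s

variable (r γ) in
noncomputable def gammaKey : (Fin (r + 1) →₀ ℕ) →+ ℝ ×ₗ Lex (Fin (r + 1) →₀ ℕ) where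
  toFun s := toLex (wt r γ s, toLex s)
  map_zero' := by simp [wt]
  map_add' s t := by simp [wt, mul_add, Finset.sum_add_distrib]; rfl

theorem gammaKey_injective : Function.Injective (gammaKey r γ) := fun _ _ h =>
  congrArg (fun x : ℝ ×ₗ Lex (Fin (r + 1) →₀ ℕ) => ofLex (ofLex x).2) h

theorem ltGamma_iff_gammaKey_lt {s t : Fin (r + 1) →₀ ℕ} :
    ltGamma r γ s t ↔ gammaKey r γ s < gammaKey r γ t := by
  simp [ltGamma, gammaKey, Prod.Lex.toLex_lt_toLex, Finsupp.Lex.lt_iff]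

theorem wt_le_of_gammaKey_le {s t : Fin (r + 1) →₀ ℕ} (h : gammaKey r γ s ≤ gammaKey r γ t) :
    wt r γ s ≤ wt r γ t :=
  Prod.Lex.monotone_fst _ _ h

theorem gammaKey_le_of_forall_ltGamma {k : Type*} [CommSemiring k]
    {f : MvPolynomial (Fin (r + 1)) k} {mα : Fin (r + 1) →₀ ℕ}
    (hmax : ∀ s ∈ f.support, s ≠ mα → ltGamma r γ s mα) :
    ∀ s ∈ f.support, gammaKey r γ s ≤ gammaKey r γ mα := fun s hs =>
  (eq_or_ne s mα).elim (fun h => h ▸ le_rfl) fun h =>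
    (ltGamma_iff_gammaKey_lt.mp (hmax s hs h)).le

end weight

section minors

variable {r : ℕ} {γ : Fin (r + 1) → ℝ} {ι k : Type*} [Fintype ι] [DecidableEq ι] [CommRing k]
  {f : MvPolynomial (Fin (r + 1)) k} {mα : Fin (r + 1) →₀ ℕ}

theorem det_coeff_monomial_mul_leading_ne_zero [NoZeroDivisors k] (hα : mα ∈ f.support)
    (hlead : ∀ s ∈ f.support, gammaKey r γ s ≤ gammaKey r γ mα) {mD : ι → (Fin (r + 1) →₀ ℕ)}
    (hmD : Function.Injective mD) :
    Matrix.det (fun i j : ι => coeff (mD j + mα) (monomial (mD i) (1 : k) * f)) ≠ 0 := by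
  refine ne_of_eq_of_ne
    (Matrix.det_eq_prod_diag_of_lt_imp_eq_zero _ ((gammaKey_injective (γ := γ)).comp hmD) ?_) ?_
  · intro i j hij
    by_contra hne
    obtain ⟨s, hs, hsum⟩ := exists_mem_support_add_eq_of_coeff_monomial_mul_ne_zero hne
    have hle : gammaKey r γ (mD j) + gammaKey r γ mα ≤ gammaKey r γ (mD i) + gammaKey r γ mα := by
      rw [← map_add, ← hsum, map_add]
      exact add_le_add_right (hlead s hs) _
    exact (le_of_add_le_add_right hle).not_gt hij
  · simpa using pow_ne_zero (Fintype.card ι) (mem_support_iff.mp hα)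

theorem wt_sum_le_of_det_ne_zero (hwt : ∀ s ∈ f.support, wt r γ s ≤ wt r γ mα)
    (mD : ι → (Fin (r + 1) →₀ ℕ)) {a : ι → (Fin (r + 1) →₀ ℕ)}
    (ha : Matrix.det (fun i j : ι => coeff (a j) (monomial (mD i) (1 : k) * f)) ≠ 0) :
    wt r γ (∑ j, a j) ≤ wt r γ (∑ j, (mD j + mα)) := by
  obtain ⟨σ, hσ⟩ := Matrix.exists_perm_forall_ne_zero_of_det_ne_zero ha
  choose s hs hsum using fun j => exists_mem_support_add_eq_of_coeff_monomial_mul_ne_zero (hσ j)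
  calc wt r γ (∑ j, a j) = ∑ j, wt r γ (mD (σ j)) + ∑ j, wt r γ (s j) := by
        simp only [← hsum, wt_sum, wt_add, Finset.sum_add_distrib]
    _ ≤ ∑ j, wt r γ (mD j) + ∑ j, wt r γ mα := by
        rw [Equiv.sum_comp σ (fun j => wt r γ (mD j))]
        gcongr with j
        exact hwt _ (hs j)
    _ = wt r γ (∑ j, (mD j + mα)) := by
        simp only [wt_sum, wt_add, Finset.sum_add_distrib]

end minors

theorem stmt_6_general (k : Type*) [Field k] (r d D N : ℕ) (γ : Fin (r + 1) → ℝ)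
    (f : MvPolynomial (Fin (r + 1)) k)
    (mα : Fin (r + 1) →₀ ℕ) (hα : mα ∈ f.support)
    (hmax : ∀ s ∈ f.support, s ≠ mα → ltGamma r γ s mα)
    (mD : Fin N → (Fin (r + 1) →₀ ℕ))
    (hmDinj : Function.Injective mD)
    (b : Fin N → (Fin (r + 1) →₀ ℕ)) (hb : ∀ i, b i = mD i + mα) :
    Matrix.det (fun i j : Fin N => coeff (b j) ((monomial (mD i) (1 : k)) * f)) ≠ 0 ∧
      (∀ a : Fin N → (Fin (r + 1) →₀ ℕ), Function.Injective a →
        (∀ j, (a j).sum (fun _ e => e) = d + D) →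
        Matrix.det (fun i j : Fin N => coeff (a j) ((monomial (mD i) (1 : k)) * f)) ≠ 0 →
        wt r γ (∑ j, a j) ≤ wt r γ (∑ j, b j)) ∧
      wt r γ (∑ j, b j) = N * wt r γ mα + wt r γ (∑ i, mD i) := by
  obtain rfl : b = fun j => mD j + mα := funext hb
  have hlead := gammaKey_le_of_forall_ltGamma hmax
  refine ⟨det_coeff_monomial_mul_leading_ne_zero hα hlead hmDinj,
    fun a _ _ ha => wt_sum_le_of_det_ne_zero (fun s hs => wt_le_of_gammaKey_le (hlead s hs)) mD ha,
    ?_⟩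
  rw [wt_sum, wt_sum]
  simp only [wt_add, Finset.sum_add_distrib, Finset.sum_const, Finset.card_univ,
    Fintype.card_fin, nsmul_eq_mul, add_comm]

/-- The leading wedge of the Plücker coordinates of `span{m·f : m ∈ M_D}` is
`⋀ᵢ (m_{i,D}·mα)`: its Plücker coordinate (a maximal minor of the coefficient matrix) is
nonzero, it has maximal `γ`-weight among the nonzero Plücker coordinates, and its total weight
is `|M_D|·⟨γ,exp mα⟩ + ⟨γ, Σᵢ exp(m_{i,D})⟩`. -/
theorem stmt_6 (k : Type*) [Field k] (r d D N : ℕ) (γ : Fin (r + 1) → ℝ)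
    (f : MvPolynomial (Fin (r + 1)) k) (hf : f ≠ 0) (hhom : f.IsHomogeneous d)
    (mα : Fin (r + 1) →₀ ℕ) (hα : mα ∈ f.support)
    (hmax : ∀ s ∈ f.support, s ≠ mα → ltGamma r γ s mα)
    (mD : Fin N → (Fin (r + 1) →₀ ℕ))
    (hmDdeg : ∀ i, (mD i).sum (fun _ e => e) = D)
    (hmDinj : Function.Injective mD)
    (hmDsurj : ∀ s : Fin (r + 1) →₀ ℕ, s.sum (fun _ e => e) = D → ∃ i, mD i = s)
    (b : Fin N → (Fin (r + 1) →₀ ℕ)) (hb : ∀ i, b i = mD i + mα) :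
    Matrix.det (fun i j : Fin N => coeff (b j) ((monomial (mD i) (1 : k)) * f)) ≠ 0 ∧
      (∀ a : Fin N → (Fin (r + 1) →₀ ℕ), Function.Injective a →
        (∀ j, (a j).sum (fun _ e => e) = d + D) →
        Matrix.det (fun i j : Fin N => coeff (a j) ((monomial (mD i) (1 : k)) * f)) ≠ 0 →
        wt r γ (∑ j, a j) ≤ wt r γ (∑ j, b j)) ∧
      wt r γ (∑ j, b j) = N * wt r γ mα + wt r γ (∑ i, mD i) :=
  stmt_6_general k r d D N γ f mα hα hmax mD hmDinj b hb
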